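/- arXiv:1909.01633 — 2 statements merged into one kernel-verified Lean document; each statement's English description precedes it below -/
import Mathlib

section
/- For every n ≥ 2, the group Out(F_n) contains a subgroup isomorphic to the semidirect product F_2 ⋉ F_2^{2(n−2)}, namely the image under the quotient map Aut(F_n) → Out(F_n) of the group of automorphisms Φ with Φ(x_1)=α(x_1), Φ(x_2)=α(x_2), Φ(x_j)= l_j x_j r_j^{-1} for j ≥ 3, where α ranges over a rank-2 free subgroup U ≤ Aut(F(x_1,x_2)) mapping isomorphically to a free subgroup of Out(F_2), and l_j, r_j range over F(x_1,x_2). -/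
/-- The subgroup of inner automorphisms is normal in `MulAut G`. -/
instance conjRangeNormal (G : Type) [Group G] :
    ((MulAut.conj : G →* MulAut G).range).Normal := by
  constructor
  rintro - ⟨g, rfl⟩ φ
  refine ⟨φ g, ?_⟩
  ext x
  simp [MulAut.conj, mul_assoc]

/-- The outer automorphism group `Out(G) = Aut(G)/Inn(G)`. -/
def Out (G : Type) [Group G] : Type :=
  MulAut G ⧸ (MulAut.conj : G →* MulAut G).range

instance (G : Type) [Group G] : Group (Out G) :=
  QuotientGroup.Quotient.group _

/-!
The matrices `A = [[1, 2], [0, 1]]` and `B = [[1, 0], [2, 1]]` generate a free subgroup of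
`SL(2, ℤ)` (ping-pong on `ℤ² ∖ 0`). They are the actions on exponent vectors of the
automorphisms `x₀ ↦ x₀, x₁ ↦ x₁ x₀²` and `x₀ ↦ x₀ x₁², x₁ ↦ x₁` of `F₂`, and inner automorphisms
act trivially on exponent vectors, so these two automorphisms generate a free subgroup `U` of
`Aut(F₂)` meeting `Inn(F₂)` trivially. The same representation shows that `F₂` has trivial
centre: a central element maps to `±1`, so its square is trivial, and `F₂` is torsion-free.

Write `F_n = F(Y ⊕ J)` with `Y` the first two generators. If `Φ(l, r, α)` is conjugation by `g`,
compose with the retractions `F(Y ⊕ J) → F(Y)` fixing `Y` and sending every `x_j` to a fixed `c`.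
For `c = 1` this exhibits `α` as inner, so `α = 1`; then `g` centralises `F(Y)`, so every
retraction of `g` is central, hence trivial; finally `l_j⁻¹ c r_j = c` for all `c` forces
`l_j = r_j = 1`.
-/

namespace Out

variable {G : Type} [Group G]

def mk : MulAut G →* Out G := QuotientGroup.mk' _

lemma mk_eq_one_iff {f : MulAut G} : mk f = 1 ↔ ∃ g, MulAut.conj g = f :=
  QuotientGroup.eq_one_iff f

def congr {H : Type} [Group H] (e : G ≃* H) : Out G ≃* Out H :=
  QuotientGroup.congr _ _ (MulAut.congr e) <| by
    have : (MulAut.congr e : MulAut G →* MulAut H).comp MulAut.conj = MulAut.conj.comp e := by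
      ext g x
      simp [MulAut.congr]
    rw [MonoidHom.map_range, this, MonoidHom.range_comp, MonoidHom.range_eq_top.2 e.surjective,
      ← MonoidHom.range_eq_map]

end Out

def MonoidHom.toMulAut {G M : Type*} [Group G] [Monoid M] (f : G →* Monoid.End M) :
    G →* MulAut M where
  toFun g := MonoidHom.toMulEquiv (f g) (f g⁻¹)
    (show f g⁻¹ * f g = 1 by rw [← map_mul, inv_mul_cancel, map_one])
    (show f g * f g⁻¹ = 1 by rw [← map_mul, mul_inv_cancel, map_one])
  map_one' := MulEquiv.ext fun x => DFunLike.congr_fun (map_one f) x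
  map_mul' g h := MulEquiv.ext fun x => DFunLike.congr_fun (map_mul f g h) x

lemma eq_one_of_forall_inv_mul_mul_eq {G : Type*} [Group G] (hG : Subgroup.center G = ⊥) {a b : G}
    (h : ∀ c, a⁻¹ * c * b = c) : a = 1 ∧ b = 1 := by
  have hab : a = b := inv_mul_eq_one.1 (by simpa using h 1)
  subst hab
  have ha : a ∈ Subgroup.center G := Subgroup.mem_center_iff.2 fun c =>
    inv_mul_eq_iff_eq_mul.1 ((mul_assoc _ _ _).symm.trans (h c))
  rw [hG, Subgroup.mem_bot] at ha
  exact ⟨ha, ha⟩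

instance {G M : Type*} [Group G] [AddMonoid M] [DistribMulAction G M] :
    MulAction G {v : M // v ≠ 0} where
  smul g v := ⟨g • v.1, (smul_ne_zero_iff_ne g).2 v.2⟩
  one_smul v := Subtype.ext (one_smul G v.1)
  mul_smul g h v := Subtype.ext (mul_smul g h v.1)

@[simp] lemma coe_smul_ne_zero {G M : Type*} [Group G] [AddMonoid M] [DistribMulAction G M]
    (g : G) (v : {v : M // v ≠ 0}) : ((g • v : {v : M // v ≠ 0}) : M) = g • (v : M) := rfl

section Twist

variable {Y J Γ : Type} [Group Γ] (α : Γ →* MulAut (FreeGroup Y))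

def coeffAction : Γ →* MulAut (Fin 2 × J → FreeGroup Y) :=
  (MulDistribMulAction.toMulAut (MulAut (FreeGroup Y)) (Fin 2 × J → FreeGroup Y)).comp α

@[simp] lemma coeffAction_apply (g : Γ) (l : Fin 2 × J → FreeGroup Y) (k : Fin 2 × J) :
    coeffAction α g l k = α g (l k) := rfl

-- `x_j ↦ l_j⁻¹ x_j r_j` with `(l_j, r_j) = (p.left (0, j), p.left (1, j))`: inverting the paper's
-- `l_j` and `r_j` makes `p ↦ twist α p` multiplicative for the semidirect product law.
def twist (p : (Fin 2 × J → FreeGroup Y) ⋊[coeffAction α] Γ) :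
    FreeGroup (Y ⊕ J) →* FreeGroup (Y ⊕ J) :=
  FreeGroup.lift <| Sum.elim (fun y => FreeGroup.map Sum.inl (α p.right (.of y))) fun j =>
    (FreeGroup.map Sum.inl (p.left (0, j)))⁻¹ * .of (.inr j) * FreeGroup.map Sum.inl (p.left (1, j))

variable {α}

@[simp] lemma twist_of_inl (p : (Fin 2 × J → FreeGroup Y) ⋊[coeffAction α] Γ) (y : Y) :
    twist α p (.of (.inl y)) = FreeGroup.map Sum.inl (α p.right (.of y)) :=
  FreeGroup.lift_apply_of

@[simp] lemma twist_map_inl (p : (Fin 2 × J → FreeGroup Y) ⋊[coeffAction α] Γ) (u : FreeGroup Y) :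
    twist α p (FreeGroup.map Sum.inl u) = FreeGroup.map Sum.inl (α p.right u) := by
  induction u using FreeGroup.induction_on <;> simp_all

@[simp] lemma twist_of_inr (p : (Fin 2 × J → FreeGroup Y) ⋊[coeffAction α] Γ) (j : J) :
    twist α p (.of (.inr j)) = (FreeGroup.map Sum.inl (p.left (0, j)))⁻¹ * .of (.inr j) *
      FreeGroup.map Sum.inl (p.left (1, j)) :=
  FreeGroup.lift_apply_of

lemma twist_one : twist α (1 : (Fin 2 × J → FreeGroup Y) ⋊[coeffAction α] Γ) = MonoidHom.id _ :=
  FreeGroup.ext_hom _ _ fun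
    | .inl y => by simp
    | .inr j => by simp

lemma twist_mul (p q : (Fin 2 × J → FreeGroup Y) ⋊[coeffAction α] Γ) :
    twist α (p * q) = (twist α p).comp (twist α q) :=
  FreeGroup.ext_hom _ _ fun
    | .inl y => by simp [MulAut.mul_apply]
    | .inr j => by simp [mul_assoc]

variable (α)

def twistHom : (Fin 2 × J → FreeGroup Y) ⋊[coeffAction α] Γ →* Monoid.End (FreeGroup (Y ⊕ J)) where
  toFun := twist α
  map_one' := twist_one
  map_mul' := twist_mul

def twistOut : (Fin 2 × J → FreeGroup Y) ⋊[coeffAction α] Γ →* Out (FreeGroup (Y ⊕ J)) :=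
  Out.mk.comp (twistHom α).toMulAut

def collapse (c : FreeGroup Y) : FreeGroup (Y ⊕ J) →* FreeGroup Y :=
  FreeGroup.lift (Sum.elim .of fun _ => c)

@[simp] lemma collapse_map_inl (c u : FreeGroup Y) :
    collapse (J := J) c (FreeGroup.map Sum.inl u) = u := by
  induction u using FreeGroup.induction_on <;> simp_all [collapse]

@[simp] lemma collapse_of_inr (c : FreeGroup Y) (j : J) : collapse c (.of (.inr j)) = c :=
  FreeGroup.lift_apply_of

variable {α}

theorem injective_twistOut (hα : Function.Injective (Out.mk.comp α))
    (hY : Subgroup.center (FreeGroup Y) = ⊥) : Function.Injective (twistOut α (J := J)) := by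
  refine (injective_iff_map_eq_one _).2 fun p hp => ?_
  obtain ⟨g, hg⟩ := Out.mk_eq_one_iff.1 hp
  have hconj (x : FreeGroup (Y ⊕ J)) : g * x * g⁻¹ = twist α p x := DFunLike.congr_fun hg x
  have hright : p.right = 1 := by
    refine (injective_iff_map_eq_one _).1 hα _ (Out.mk_eq_one_iff.2 ⟨collapse 1 g, ?_⟩)
    ext u
    simpa using congrArg (collapse 1) (hconj (FreeGroup.map Sum.inl u))
  have hcentral (c : FreeGroup Y) : collapse (J := J) c g = 1 := by
    rw [← Subgroup.mem_bot, ← hY, Subgroup.mem_center_iff]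
    intro u
    have := congrArg (collapse c) (hconj (FreeGroup.map Sum.inl u))
    simp only [twist_map_inl, hright, map_one, MulAut.one_apply, map_mul, map_inv,
      collapse_map_inl] at this
    exact (mul_inv_eq_iff_eq_mul.1 this).symm
  have hleft (j : J) : p.left (0, j) = 1 ∧ p.left (1, j) = 1 :=
    eq_one_of_forall_inv_mul_mul_eq hY fun c => by
      simpa [hcentral c] using (congrArg (collapse c) (hconj (.of (.inr j)))).symm
  refine SemidirectProduct.ext ?_ hright
  ext ⟨i, j⟩
  fin_cases i
  exacts [(hleft j).1, (hleft j).2]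

end Twist

open scoped MatrixGroups

namespace Sanov

def A : SL(2, ℤ) := ⟨!![1, 2; 0, 1], by simp [Matrix.det_fin_two]⟩
def B : SL(2, ℤ) := ⟨!![1, 0; 2, 1], by simp [Matrix.det_fin_two]⟩

lemma coe_A : (A : Matrix (Fin 2) (Fin 2) ℤ) = !![1, 2; 0, 1] := rfl
lemma coe_B : (B : Matrix (Fin 2) (Fin 2) ℤ) = !![1, 0; 2, 1] := rfl
lemma coe_A_inv : ((A⁻¹ : SL(2, ℤ)) : Matrix (Fin 2) (Fin 2) ℤ) = !![1, -2; 0, 1] := by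
  simp [Matrix.SpecialLinearGroup.coe_inv, coe_A, Matrix.adjugate_fin_two]
lemma coe_B_inv : ((B⁻¹ : SL(2, ℤ)) : Matrix (Fin 2) (Fin 2) ℤ) = !![1, 0; -2, 1] := by
  simp [Matrix.SpecialLinearGroup.coe_inv, coe_B, Matrix.adjugate_fin_two]

lemma A_smul (v : Fin 2 → ℤ) : A • v = ![v 0 + 2 * v 1, v 1] := by
  rw [Matrix.SpecialLinearGroup.smul_def, coe_A]
  ext i; fin_cases i <;> simp [Matrix.vecHead, Matrix.vecTail]
lemma B_smul (v : Fin 2 → ℤ) : B • v = ![v 0, 2 * v 0 + v 1] := by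
  rw [Matrix.SpecialLinearGroup.smul_def, coe_B]
  ext i; fin_cases i <;> simp [Matrix.vecHead, Matrix.vecTail]
lemma A_inv_smul (v : Fin 2 → ℤ) : A⁻¹ • v = ![v 0 - 2 * v 1, v 1] := by
  rw [Matrix.SpecialLinearGroup.smul_def, coe_A_inv]
  ext i; fin_cases i <;> simp [Matrix.vecHead, Matrix.vecTail]; ring
lemma B_inv_smul (v : Fin 2 → ℤ) : B⁻¹ • v = ![v 0, v 1 - 2 * v 0] := by
  rw [Matrix.SpecialLinearGroup.smul_def, coe_B_inv]
  ext i; fin_cases i <;> simp [Matrix.vecHead, Matrix.vecTail]; ring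

lemma sq_add_sq_pos_of_ne_zero {v : Fin 2 → ℤ} (hv : v ≠ 0) : 0 < v 0 ^ 2 + v 1 ^ 2 := by
  have : v 0 ≠ 0 ∨ v 1 ≠ 0 := by
    by_contra! h
    exact hv (funext fun i => by fin_cases i <;> simp [h.1, h.2])
  rcases this with h | h <;> positivity

-- `A^{±1}` push vectors towards the `x`-axis (`|y| ≤ |x|`), `B^{±1}` towards the `y`-axis; the
-- sign of `x y` separates positive from negative powers, and strictness breaks ties at `|x| = |y|`.
def pingX : Fin 2 → Set {v : Fin 2 → ℤ // v ≠ 0} :=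
  ![{v | v.1 1 ^ 2 ≤ v.1 0 ^ 2 ∧ 0 < v.1 0 * v.1 1},
    {v | v.1 0 ^ 2 < v.1 1 ^ 2 ∧ 0 < v.1 0 * v.1 1}]
def pingY : Fin 2 → Set {v : Fin 2 → ℤ // v ≠ 0} :=
  ![{v | v.1 1 ^ 2 < v.1 0 ^ 2 ∧ v.1 0 * v.1 1 ≤ 0},
    {v | v.1 0 ^ 2 ≤ v.1 1 ^ 2 ∧ v.1 0 * v.1 1 ≤ 0}]

def ρ : FreeGroup (Fin 2) →* SL(2, ℤ) := FreeGroup.lift ![A, B]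

lemma ρ_injective : Function.Injective ρ := by
  refine FreeGroup.injective_lift_of_ping_pong _ pingX pingY ?_ ?_ ?_ ?_ ?_ ?_
  · intro i
    fin_cases i
    exacts [⟨⟨![1, 1], by simp⟩, by simp [pingX]⟩, ⟨⟨![1, 2], by simp⟩, by simp [pingX]⟩]
  · intro i j hij
    fin_cases i <;> fin_cases j <;> simp only [ne_eq, not_true_eq_false] at hij <;>
      exact Set.disjoint_left.2 fun v h h' => by
        simp only [pingX, Fin.zero_eta, Fin.mk_one, Matrix.cons_val_zero, Matrix.cons_val_one,
          Set.mem_ofPred_eq] at h h'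
        linarith
  · intro i j hij
    fin_cases i <;> fin_cases j <;> simp only [ne_eq, not_true_eq_false] at hij <;>
      exact Set.disjoint_left.2 fun v h h' => by
        simp only [pingY, Fin.zero_eta, Fin.mk_one, Matrix.cons_val_zero, Matrix.cons_val_one,
          Set.mem_ofPred_eq] at h h'
        linarith
  · intro i j
    fin_cases i <;> fin_cases j <;>
      exact Set.disjoint_left.2 fun v h h' => by
        simp only [pingX, pingY, Fin.zero_eta, Fin.mk_one, Matrix.cons_val_zero,
          Matrix.cons_val_one, Set.mem_ofPred_eq] at h h'
        linarith
  all_goals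
    intro i
    rw [Set.smul_set_subset_iff]
    intro v hv
    have := sq_add_sq_pos_of_ne_zero v.2
    fin_cases i <;>
      simp only [pingX, pingY, Fin.zero_eta, Fin.mk_one, Matrix.cons_val_zero, Matrix.cons_val_one,
        Set.mem_compl_iff, Set.mem_ofPred_eq, not_and, Pi.inv_apply, coe_smul_ne_zero, A_smul,
        B_smul, A_inv_smul, B_inv_smul] at hv ⊢ <;>
      rcases imp_iff_not_or.mp hv with h | h <;> constructor <;>
      nlinarith [sq_nonneg (v.1 0 + v.1 1), sq_nonneg (v.1 0 - v.1 1)]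

def transvA : MulAut (FreeGroup (Fin 2)) :=
  MonoidHom.toMulEquiv (FreeGroup.lift ![.of 0, .of 1 * .of 0 ^ 2])
    (FreeGroup.lift ![.of 0, .of 1 * (.of 0)⁻¹ ^ 2])
    (by ext i; fin_cases i <;> simp)
    (by ext i; fin_cases i <;> simp)

def transvB : MulAut (FreeGroup (Fin 2)) :=
  MonoidHom.toMulEquiv (FreeGroup.lift ![.of 0 * .of 1 ^ 2, .of 1])
    (FreeGroup.lift ![.of 0 * (.of 1)⁻¹ ^ 2, .of 1])
    (by ext i; fin_cases i <;> simp)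
    (by ext i; fin_cases i <;> simp)

def α : FreeGroup (Fin 2) →* MulAut (FreeGroup (Fin 2)) := FreeGroup.lift ![transvA, transvB]

-- Exponent sums, i.e. the abelianisation `F₂ → ℤ²`.
def ε : FreeGroup (Fin 2) →* Multiplicative (Fin 2 → ℤ) :=
  FreeGroup.lift fun i => .ofAdd (Pi.single i 1)

lemma toAdd_ε_α_apply (w x : FreeGroup (Fin 2)) :
    (ε (α w x)).toAdd = ρ w • (ε x).toAdd := by
  induction w using FreeGroup.induction_on generalizing x with
  | C1 => simp
  | of i =>
    induction x using FreeGroup.induction_on with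
    | C1 => simp
    | of j =>
      fin_cases i <;> fin_cases j <;> ext k <;> fin_cases k <;>
        simp [α, ρ, ε, transvA, transvB, A_smul, B_smul]
    | inv_of j ih => simpa using ih
    | mul x y hx hy => simp [hx, hy]
  | inv_of i ih =>
    rw [map_inv, map_inv, MulAut.inv_apply, eq_inv_smul_iff, ← ih, MulEquiv.apply_symm_apply]
  | mul v w hv hw => rw [map_mul, map_mul, MulAut.mul_apply, hv, hw, mul_smul]

lemma sq_eq_one_of_commute {M : SL(2, ℤ)} (hA : Commute M A) (hB : Commute M B) : M ^ 2 = 1 := by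
  have hA' := congrArg (fun N : SL(2, ℤ) => (N : Matrix (Fin 2) (Fin 2) ℤ)) hA.eq
  have hB' := congrArg (fun N : SL(2, ℤ) => (N : Matrix (Fin 2) (Fin 2) ℤ)) hB.eq
  simp only [Matrix.SpecialLinearGroup.coe_mul, coe_A, coe_B] at hA' hB'
  have hc : M 1 0 = 0 := by simpa [Matrix.mul_apply, Fin.sum_univ_two] using congrFun₂ hA' 0 0
  have hb : M 0 1 = 0 := by simpa [Matrix.mul_apply, Fin.sum_univ_two] using congrFun₂ hB' 0 0
  have had : M 0 0 = M 1 1 := by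
    have := congrFun₂ hA' 0 1
    simp only [Matrix.mul_apply, Fin.sum_univ_two, Matrix.of_apply, Matrix.cons_val',
      Matrix.cons_val_zero, Matrix.cons_val_one, Matrix.empty_val', Matrix.cons_val_fin_one] at this
    linarith
  have hdet : M 1 1 * M 1 1 = 1 := by
    have := M.det_coe
    rwa [Matrix.det_fin_two, hb, hc, had, mul_zero, sub_zero] at this
  ext i j
  fin_cases i <;> fin_cases j <;> simp [sq, Matrix.mul_apply, Fin.sum_univ_two, hb, hc, had, hdet]

theorem injective_mk_comp_α : Function.Injective (Out.mk.comp α) := by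
  refine (injective_iff_map_eq_one _).2 fun w hw => ?_
  obtain ⟨c, hc⟩ := Out.mk_eq_one_iff.1 hw
  have hfix (j : Fin 2) : ρ w • (Pi.single j 1 : Fin 2 → ℤ) = Pi.single j 1 := by
    have := toAdd_ε_α_apply w (.of j)
    rw [← hc, MulAut.conj_apply, map_mul ε, map_mul ε, map_inv ε, mul_inv_cancel_comm] at this
    simpa [ε] using this.symm
  have hρ : ρ w = 1 := Matrix.SpecialLinearGroup.ext _ _ fun i j => by
    simpa [Matrix.SpecialLinearGroup.smul_def, Matrix.mulVec_single_one, Matrix.one_apply,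
      Pi.single_apply, eq_comm] using congrFun (hfix j) i
  exact ρ_injective (hρ.trans (map_one ρ).symm)

theorem center_freeGroup_eq_bot : Subgroup.center (FreeGroup (Fin 2)) = ⊥ := by
  refine eq_bot_iff.2 fun z hz => ?_
  have hcomm (i : Fin 2) : Commute (ρ z) (ρ (.of i)) :=
    Commute.map (Subgroup.mem_center_iff.1 hz (.of i)).symm ρ
  have hsq : ρ (z ^ 2) = 1 := by
    rw [map_pow]
    exact sq_eq_one_of_commute (by simpa [ρ] using hcomm 0) (by simpa [ρ] using hcomm 1)
  exact Subgroup.mem_bot.2 (sq_eq_one.1 (ρ_injective (hsq.trans (map_one ρ).symm)))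

end Sanov

/-- For every `n ≥ 2`, the group `Out(F_n)` contains a subgroup
isomorphic to a semidirect product `F_2^{2(n-2)} ⋊ F_2` (for a suitable action of
`F_2` on the direct product of `2(n-2)` copies of `F_2`), namely the image of the
group of automorphisms `Φ(x_1)=α(x_1), Φ(x_2)=α(x_2), Φ(x_j)=l_j x_j r_j⁻¹` with
`α` in a rank-2 free subgroup `U ≤ Aut(F(x_1,x_2))` lifting a free subgroup of
`Out(F_2)` and `l_j, r_j ∈ F(x_1,x_2)`. -/
theorem stmt6 (n : ℕ) (hn : 2 ≤ n) :
    ∃ (φ : FreeGroup (Fin 2) →* MulAut (∀ _ : Fin (2 * (n - 2)), FreeGroup (Fin 2)))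
      (H : Subgroup (Out (FreeGroup (Fin n)))),
      Nonempty
        (((∀ _ : Fin (2 * (n - 2)), FreeGroup (Fin 2)) ⋊[φ] FreeGroup (Fin 2)) ≃* H) := by
  let e : Fin 2 ⊕ Fin (n - 2) ≃ Fin n := finSumFinEquiv.trans (finCongr (by omega))
  let reindex : (Fin 2 × Fin (n - 2) → FreeGroup (Fin 2)) ≃*
      (Fin (2 * (n - 2)) → FreeGroup (Fin 2)) :=
    MulEquiv.arrowCongr finProdFinEquiv (MulEquiv.refl _)
  let f := (Out.congr (FreeGroup.freeGroupCongr e)).toMonoidHom.comp <|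
    (twistOut Sanov.α).comp (SemidirectProduct.congr' reindex (MulEquiv.refl _)).symm.toMonoidHom
  have hf : Function.Injective f :=
    (Out.congr _).injective.comp <|
      (injective_twistOut Sanov.injective_mk_comp_α Sanov.center_freeGroup_eq_bot).comp
        (MulEquiv.injective _)
  exact ⟨_, f.range, ⟨MonoidHom.ofInjective hf⟩⟩
end

section
/- For every n ≥ 3, the Torelli group 𝒯_n = ker(Out(F_n) → GL(n,ℤ)) contains a subgroup isomorphic to the direct product F_2^{2n−4} of 2n−4 copies of the free group of rank 2; explicitly, with u = [x_1,x_2] and v = [x_1^{-1},x_2^{-1}], the automorphisms Φ(x_1)=x_1, Φ(x_2)=x_2, Φ(x_j)= l_j x_j r_j^{-1} for j ≥ 3, with l_j, r_j ∈ F(u,v), form a subgroup of Aut(F_n) isomorphic to F_2^{2n−4} mapping injectively into 𝒯_n. -/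
/-- The natural action of `Aut(G)` on the abelianization of `G`
(for `G = F_n`, this is the map `Aut(F_n) → GL(n,ℤ)`). -/
def autAb (G : Type) [Group G] : MulAut G →* MulAut (Abelianization G) where
  toFun e := e.abelianizationCongr
  map_one' := by
    ext x
    induction x using QuotientGroup.induction_on
    rfl
  map_mul' := by
    intro e f
    ext x
    induction x using QuotientGroup.induction_on
    rfl

/-- The map `Out(G) → Aut(G^{ab})` induced by abelianization (for `G = F_n`,
this is the natural map `Out(F_n) → GL(n,ℤ)`). -/
def outAb (G : Type) [Group G] : Out G →* MulAut (Abelianization G) :=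
  QuotientGroup.lift _ (autAb G) (by
    rintro - ⟨g, rfl⟩
    ext x
    induction x using QuotientGroup.induction_on
    show Abelianization.of (g * _ * g⁻¹) = Abelianization.of _
    rw [map_mul, map_mul, map_inv]
    exact mul_inv_cancel_comm _ _)

/-- The Torelli group `𝒯_n = ker (Out(F_n) → GL(n,ℤ))`. -/
def TorelliOut (n : ℕ) : Subgroup (Out (FreeGroup (Fin n))) :=
  (outAb (FreeGroup (Fin n))).ker


open Subgroup
open scoped commutatorElement

namespace FreeGroup

variable {α : Type*}

theorem not_commute_of_ne {a b : α} (hab : a ≠ b) : ¬Commute (of a) (of b) := by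
  classical
  intro h
  have := h.map (lift fun x => if x = a then of (0 : Fin 2) else of 1)
  simp only [lift_apply_of, if_neg hab.symm, ite_true] at this
  exact absurd this (by unfold Commute SemiconjBy; decide)

end FreeGroup

namespace IsFreeGroup

variable {G : Type*} [Group G] [IsFreeGroup G]

theorem subsingleton_generators [IsMulCommutative G] : Subsingleton (Generators G) := by
  refine ⟨fun a b => by_contra fun hab => FreeGroup.not_commute_of_ne hab ?_⟩
  have hcomm : Commute (of a) (of b) := Std.Commutative.comm (op := (· * ·)) _ _
  simpa [of] using hcomm.map (toFreeGroup G)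

theorem isCyclic_of_subsingleton_generators [Subsingleton (Generators G)] : IsCyclic G := by
  have : IsCyclic (FreeGroup (Generators G)) := by
    cases isEmpty_or_nonempty (Generators G)
    · infer_instance
    · have := uniqueOfSubsingleton (Classical.arbitrary (Generators G))
      infer_instance
  exact isCyclic_of_surjective (toFreeGroup G).symm.toMonoidHom (toFreeGroup G).symm.surjective

theorem exists_injective_of_not_commute {x y : G} (h : ¬Commute x y) :
    ∃ θ : FreeGroup (Fin 2) →* G, Function.Injective θ := by
  obtain ⟨a, b, hab⟩ : ∃ a b : Generators G, a ≠ b := by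
    by_contra! hsub
    have : Subsingleton (Generators G) := ⟨hsub⟩
    let := (isCyclic_of_subsingleton_generators (G := G)).commGroup
    exact h (mul_comm x y)
  refine ⟨(toFreeGroup G).symm.toMonoidHom.comp (FreeGroup.map ![a, b]),
    (toFreeGroup G).symm.injective.comp (FreeGroup.map_injective ?_)⟩
  intro i j
  fin_cases i <;> fin_cases j <;> simp [hab, hab.symm]

end IsFreeGroup

namespace FreeGroup

variable {α : Type*} [DecidableEq α]

theorem mem_zpowers_of_commute {g : FreeGroup α} {a : α} (h : Commute g (of a)) :
    g ∈ zpowers (of a) := by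
  let C := closure {g, of a}
  have : IsMulCommutative C := isMulCommutative_closure (by
    simp only [Set.mem_insert_iff, Set.mem_singleton_iff]
    rintro x (rfl | rfl) y (rfl | rfl) <;> first | rfl | exact h | exact h.symm)
  have := IsFreeGroup.subsingleton_generators (G := C)
  obtain ⟨c, hc⟩ := (IsFreeGroup.isCyclic_of_subsingleton_generators (G := C)).exists_generator
  obtain ⟨m, hm⟩ := hc ⟨of a, subset_closure (by simp)⟩
  obtain ⟨k, hk⟩ := hc ⟨g, subset_closure (by simp)⟩
  -- `of a = c ^ m` is not a proper power: its exponent sum in `a` is `1 = m * ε c`.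
  let ε : FreeGroup α →* Multiplicative ℤ := lift fun x => if x = a then .ofAdd 1 else 1
  have hεm : m * (ε c).toAdd = 1 := by
    simpa [ε, ← ofAdd_zsmul] using congrArg (fun z => (ε z).toAdd) (congrArg Subtype.val hm)
  have hca : (c : FreeGroup α) = of a ^ m := by
    rcases Int.eq_one_or_neg_one_of_mul_eq_one hεm with rfl | rfl
    · simpa using congrArg Subtype.val hm
    · exact inv_eq_iff_eq_inv.mp (by simpa using congrArg Subtype.val hm)
  have hg : g = (c : FreeGroup α) ^ k := by simpa using (congrArg Subtype.val hk).symm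
  rw [hg, hca]
  exact zpow_mem (zpow_mem (mem_zpowers _) _) _

def killOf (t : α) : FreeGroup α →* FreeGroup α :=
  lift fun x => if x = t then 1 else of x

theorem killOf_of_self (t : α) : killOf t (of t) = 1 := by simp [killOf]

theorem killOf_eq_self {t : α} {w : FreeGroup α} (hw : w ∈ closure (of '' {x | x ≠ t})) :
    killOf t w = w := by
  refine (closure_le (MonoidHom.eqLocus (killOf t) (MonoidHom.id _))).2 ?_ hw
  rintro - ⟨x, hx, rfl⟩
  show killOf t (of x) = of x
  simp [killOf, show x ≠ t from hx]

theorem eq_one_of_mem_zpowers_of_mem_closure {t : α} {w : FreeGroup α}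
    (hpow : w ∈ zpowers (of t)) (hw : w ∈ closure (of '' {x | x ≠ t})) : w = 1 := by
  obtain ⟨k, rfl⟩ := hpow
  rw [← killOf_eq_self hw, map_zpow, killOf_of_self, one_zpow]

theorem eq_one_of_commute_of_ne {g : FreeGroup α} {a b : α} (hab : a ≠ b)
    (ha : Commute g (of a)) (hb : Commute g (of b)) : g = 1 := by
  refine eq_one_of_mem_zpowers_of_mem_closure (mem_zpowers_of_commute hb) ?_
  have hga := mem_zpowers_of_commute ha
  rw [zpowers_eq_closure] at hga
  exact closure_mono (Set.singleton_subset_iff.2 (Set.mem_image_of_mem of hab)) hga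

theorem eq_one_of_inv_mul_of_mul_eq {t : α} {l r : FreeGroup α}
    (hl : l ∈ closure (of '' {x | x ≠ t})) (hr : r ∈ closure (of '' {x | x ≠ t}))
    (h : l⁻¹ * of t * r = of t) : l = 1 ∧ r = 1 := by
  obtain rfl : l = r := by
    simpa [killOf_eq_self hl, killOf_eq_self hr, killOf_of_self, inv_mul_eq_one]
      using congrArg (killOf t) h
  have hcomm : Commute l (of t) := by
    rw [mul_assoc, inv_mul_eq_iff_eq_mul] at h
    exact h.symm
  have hl1 := eq_one_of_mem_zpowers_of_mem_closure (mem_zpowers_of_commute hcomm) hl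
  exact ⟨hl1, hl1⟩

theorem exists_injective_range_le_commutator_closure {S : Set α} (hS : S.Nontrivial) :
    ∃ θ : FreeGroup (Fin 2) →* FreeGroup α, Function.Injective θ ∧
      θ.range ≤ ⁅closure (of '' S), closure (of '' S)⁆ := by
  obtain ⟨a, ha, b, hb, hab⟩ := hS
  set D := ⁅closure (of '' S), closure (of '' S)⁆
  have hmem : ∀ x y : FreeGroup α, x ∈ closure (of '' S) → y ∈ closure (of '' S) → ⁅x, y⁆ ∈ D :=
    fun x y hx hy => commutator_mem_commutator hx hy
  have hofa : of a ∈ closure (of '' S) := subset_closure (Set.mem_image_of_mem of ha)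
  have hofb : of b ∈ closure (of '' S) := subset_closure (Set.mem_image_of_mem of hb)
  have hnc : ¬Commute (⟨⁅of a, of b⁆, hmem _ _ hofa hofb⟩ : D)
      ⟨⁅(of a)⁻¹, (of b)⁻¹⁆, hmem _ _ (inv_mem hofa) (inv_mem hofb)⟩ := by
    intro h
    have := (h.map D.subtype).map (lift fun x => if x = a then of (0 : Fin 2) else of 1)
    simp only [coe_subtype, map_commutatorElement, _root_.map_inv, lift_apply_of, if_neg hab.symm,
      ite_true] at this
    exact absurd this (by unfold Commute SemiconjBy; decide)
  obtain ⟨θ, hθ⟩ := IsFreeGroup.exists_injective_of_not_commute hnc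
  exact ⟨D.subtype.comp θ, Subtype.val_injective.comp hθ, by rintro - ⟨k, rfl⟩; exact (θ k).2⟩

end FreeGroup

namespace FreeGroup

variable {α : Type} {T : Set α} [DecidablePred (· ∈ T)] {K : Type*} [Group K]
  (θ : K →* FreeGroup α)

-- The paper's `x ↦ l x r⁻¹` with `l, r` inverted, so that `c ↦ twist θ c` is multiplicative.
def twist (c : T ⊕ T → K) : FreeGroup α →* FreeGroup α :=
  lift fun x => if hx : x ∈ T then (θ (c (.inl ⟨x, hx⟩)))⁻¹ * of x * θ (c (.inr ⟨x, hx⟩))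
    else of x

theorem twist_of_mem (c : T ⊕ T → K) {x : α} (hx : x ∈ T) :
    twist θ c (of x) = (θ (c (.inl ⟨x, hx⟩)))⁻¹ * of x * θ (c (.inr ⟨x, hx⟩)) := by
  simp [twist, hx]

theorem twist_of_notMem (c : T ⊕ T → K) {x : α} (hx : x ∉ T) : twist θ c (of x) = of x := by
  simp [twist, hx]

variable {θ}

theorem twist_one : twist θ (1 : T ⊕ T → K) = MonoidHom.id _ := by
  ext x
  by_cases hx : x ∈ T <;> simp [twist_of_mem, twist_of_notMem, hx]

theorem twist_apply_eq_self (hfix : θ.range ≤ closure (of '' Tᶜ)) (c : T ⊕ T → K) (k : K) :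
    twist θ c (θ k) = θ k := by
  refine (closure_le (MonoidHom.eqLocus (twist θ c) (MonoidHom.id _))).2 ?_ (hfix ⟨k, rfl⟩)
  rintro - ⟨x, hx, rfl⟩
  exact twist_of_notMem θ c hx

theorem twist_mul (hfix : θ.range ≤ closure (of '' Tᶜ)) (c d : T ⊕ T → K) :
    twist θ (c * d) = (twist θ c).comp (twist θ d) := by
  ext x
  by_cases hx : x ∈ T
  · simp only [MonoidHom.comp_apply, twist_of_mem θ _ hx, _root_.map_mul, _root_.map_inv,
      twist_apply_eq_self hfix, Pi.mul_apply, mul_inv_rev, mul_assoc]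
  · simp [twist_of_notMem θ _ hx]

def twistAut (hfix : θ.range ≤ closure (of '' Tᶜ)) : (T ⊕ T → K) →* MulAut (FreeGroup α) where
  toFun c := MonoidHom.toMulEquiv (twist θ c) (twist θ c⁻¹)
    (by rw [← twist_mul hfix, inv_mul_cancel, twist_one])
    (by rw [← twist_mul hfix, mul_inv_cancel, twist_one])
  map_one' := MulEquiv.ext fun x => by simp [twist_one]
  map_mul' c d := MulEquiv.ext fun x => by simp [twist_mul hfix]

def twistOut (hfix : θ.range ≤ closure (of '' Tᶜ)) : (T ⊕ T → K) →* Out (FreeGroup α) :=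
  (QuotientGroup.mk' _).comp (twistAut hfix)

theorem abelianization_of_twist (hcomm : θ.range ≤ commutator (FreeGroup α))
    (c : T ⊕ T → K) (w : FreeGroup α) :
    Abelianization.of (twist θ c w) = Abelianization.of w := by
  have hθ : ∀ k, Abelianization.of (θ k) = 1 := fun k =>
    (Abelianization.ker_of (G := FreeGroup α)).ge (hcomm ⟨k, rfl⟩)
  suffices Abelianization.of.comp (twist θ c) = Abelianization.of from DFunLike.congr_fun this w
  ext x
  by_cases hx : x ∈ T
  · simp [twist_of_mem θ c hx, hθ]
  · simp [twist_of_notMem θ c hx]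

theorem twistOut_mem_ker_outAb (hfix : θ.range ≤ closure (of '' Tᶜ))
    (hcomm : θ.range ≤ commutator (FreeGroup α)) (c : T ⊕ T → K) :
    twistOut hfix c ∈ (outAb (FreeGroup α)).ker := by
  show autAb (FreeGroup α) (twistAut hfix c) = 1
  ext x
  induction x using QuotientGroup.induction_on with
  | H w => exact abelianization_of_twist hcomm c w

theorem twistOut_injective [DecidableEq α] (hfix : θ.range ≤ closure (of '' Tᶜ))
    (hθ : Function.Injective θ) (hT : Tᶜ.Nontrivial) :
    Function.Injective (twistOut hfix) := by
  rw [injective_iff_map_eq_one]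
  intro c hc
  obtain ⟨g, hg⟩ := (QuotientGroup.eq_one_iff _).mp hc
  have hconj : ∀ w, g * w * g⁻¹ = twist θ c w := fun w => DFunLike.congr_fun hg w
  have hcomm : ∀ x ∉ T, Commute g (of x) := fun x hx =>
    mul_inv_eq_iff_eq_mul.mp ((hconj _).trans (twist_of_notMem θ c hx))
  obtain ⟨a, ha, b, hb, hab⟩ := hT
  obtain rfl : g = 1 := eq_one_of_commute_of_ne hab (hcomm a ha) (hcomm b hb)
  have hmem : ∀ t ∈ T, ∀ k, θ k ∈ closure (of '' {x | x ≠ t}) := fun t ht k =>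
    closure_mono (Set.image_mono fun x (hx : x ∉ T) (hxt : x = t) => hx (hxt ▸ ht))
      (hfix ⟨k, rfl⟩)
  have htriv : ∀ t : T, c (.inl t) = 1 ∧ c (.inr t) = 1 := by
    rintro ⟨t, ht⟩
    have h := (hconj (of t)).symm
    rw [twist_of_mem θ c ht, one_mul, inv_one, mul_one] at h
    obtain ⟨hl, hr⟩ := eq_one_of_inv_mul_of_mul_eq (hmem t ht _) (hmem t ht _) h
    exact ⟨(map_eq_one_iff θ hθ).mp hl, (map_eq_one_iff θ hθ).mp hr⟩
  funext i
  rcases i with t | t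
  exacts [(htriv t).1, (htriv t).2]

end FreeGroup

theorem FreeGroup.exists_le_ker_outAb_mulEquiv {α : Type} (T : Set α) (hT : Tᶜ.Nontrivial) :
    ∃ P : Subgroup (Out (FreeGroup α)),
      P ≤ (outAb (FreeGroup α)).ker ∧ Nonempty ((T ⊕ T → FreeGroup (Fin 2)) ≃* P) := by
  classical
  obtain ⟨θ, hθ, hrange⟩ := exists_injective_range_le_commutator_closure hT
  have hfix : θ.range ≤ closure (of '' Tᶜ) :=
    hrange.trans ((commutator_le_sup _ _).trans (sup_idem _).le)
  have hcomm : θ.range ≤ commutator (FreeGroup α) :=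
    hrange.trans (commutator_mono le_top le_top)
  refine ⟨(twistOut hfix).range, ?_, ⟨MonoidHom.ofInjective (twistOut_injective hfix hθ hT)⟩⟩
  rintro - ⟨c, rfl⟩
  exact twistOut_mem_ker_outAb hfix hcomm c

/-- For `n ≥ 3` the Torelli group `𝒯_n` contains a subgroup
isomorphic to the direct product `F_2^{2n-4}`; it arises (with `u = [x_1,x_2]`,
`v = [x_1⁻¹,x_2⁻¹]`) from the automorphisms `Φ(x_1)=x_1, Φ(x_2)=x_2,
Φ(x_j)=l_j x_j r_j⁻¹` (`j ≥ 3`) with `l_j, r_j ∈ F(u,v)`, which form a subgroup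
of `Aut(F_n)` isomorphic to `F_2^{2n-4}` mapping injectively into `𝒯_n`. -/
theorem stmt7 (n : ℕ) (hn : 3 ≤ n) :
    ∃ K : Subgroup (Out (FreeGroup (Fin n))),
      K ≤ TorelliOut n ∧
        Nonempty ((∀ _ : Fin (2 * n - 4), FreeGroup (Fin 2)) ≃* K) := by
  let T : Set (Fin n) := (Set.range (Fin.castLE (by omega : 2 ≤ n)))ᶜ
  have hT : Tᶜ.Nontrivial := by
    rw [compl_compl]
    exact ⟨_, ⟨0, rfl⟩, _, ⟨1, rfl⟩, by simp [Fin.ext_iff]⟩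
  have hcard : Fintype.card (Fin (2 * n - 4)) = Fintype.card (T ⊕ T) := by
    simp only [Fintype.card_sum, Fintype.card_fin, T, Fintype.card_compl_set,
      Set.card_range_of_injective (Fin.castLE_injective _)]
    omega
  obtain ⟨K, hK, ⟨e⟩⟩ := FreeGroup.exists_le_ker_outAb_mulEquiv T hT
  exact ⟨K, hK, ⟨(MulEquiv.arrowCongr (Fintype.equivOfCardEq hcard) (.refl _)).trans e⟩⟩
end
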